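/- arXiv:2105.10839 — 4 statements merged into one kernel-verified Lean document; each statement's English description precedes it below -/
import Mathlib

section
/- Let P = (P_1,…,P_N) be p-values on a probability space with values in [0,1], let I^0 ⊆ {1,…,N} be the set of indices of true null hypotheses, and suppose Assumption 1 (each P_i with i ∈ I^0 is Uniform(0,1)) and Assumption 2 (PRDS) hold. Then for any positive deterministic weights W_1,…,W_N, the false discovery rate of the level-α weighted BH procedure satisfies FDR ≤ (α/N)·Σ_{i ∈ I^0} 1/W_i. -/
open MeasureTheory ProbabilityTheory Finset

/-- Number of rejections of the (weighted) BH step-up procedure at level `α`,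
applied to the (weighted) p-values `Q`: the largest `j ≤ N` such that at least `j`
of the values `Q i` are `≤ j*α/N` (this is `0`, i.e. no rejections, when no such
`j ≥ 1` exists). -/
noncomputable def bhNumRejections (N : ℕ) (α : ℝ) (Q : Fin N → ℝ) : ℕ :=
  ((Finset.range (N + 1)).filter
      (fun j : ℕ => j ≤ (Finset.univ.filter (fun i : Fin N => Q i ≤ (j : ℝ) * α / N)).card)).sup id

/-- The set of indices rejected by the level-`α` BH procedure applied to `Q`. -/
noncomputable def bhRejected (N : ℕ) (α : ℝ) (Q : Fin N → ℝ) : Finset (Fin N) :=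
  Finset.univ.filter (fun i => Q i ≤ (bhNumRejections N α Q : ℝ) * α / N)

/-- False discovery proportion `V / max(R,1)` of the level-`α` BH procedure. -/
noncomputable def FDP (N : ℕ) (α : ℝ) (I0 : Finset (Fin N)) (Q : Fin N → ℝ) : ℝ :=
  ((bhRejected N α Q ∩ I0).card : ℝ) / max ((bhRejected N α Q).card : ℝ) 1

/-- False discovery rate `E[V / max(R,1)]` of the level-`α` BH procedure applied to
the (random, possibly weighted) p-values `Q ω`. -/
noncomputable def FDR {Ω : Type*} [MeasurableSpace Ω] (μ : Measure Ω)
    (N : ℕ) (α : ℝ) (I0 : Finset (Fin N)) (Q : Ω → Fin N → ℝ) : ℝ :=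
  ∫ ω, FDP N α I0 (Q ω) ∂μ

/-- Assumption 1: each null p-value is Uniform(0,1) (stated via its cdf). -/
def UniformNulls {Ω : Type*} [MeasurableSpace Ω] (μ : Measure Ω)
    {N : ℕ} (P : Ω → Fin N → ℝ) (I0 : Finset (Fin N)) : Prop :=
  ∀ i ∈ I0, ∀ x ∈ Set.Icc (0 : ℝ) 1, μ {ω | P ω i ≤ x} = ENNReal.ofReal x

/-- Assumption 2: the p-values are PRDS on the subset of null p-values. -/
def PRDSNulls {Ω : Type*} [MeasurableSpace Ω] (μ : Measure Ω)
    {N : ℕ} (P : Ω → Fin N → ℝ) (I0 : Finset (Fin N)) : Prop :=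
  ∀ i ∈ I0, ∀ φ : (Fin N → ℝ) → ℝ, Measurable φ → (∃ C, ∀ p, |φ p| ≤ C) →
    (∀ p q : Fin N → ℝ, (∀ j, p j ≤ q j) → φ p ≤ φ q) →
    ∀ x y : ℝ, 0 < x → x ≤ y → y ≤ 1 →
      (∫ ω in {ω | P ω i ≤ x}, φ (P ω) ∂μ) / (μ {ω | P ω i ≤ x}).toReal ≤
        (∫ ω in {ω | P ω i ≤ y}, φ (P ω) ∂μ) / (μ {ω | P ω i ≤ y}).toReal

/-! ### Auxiliary lemmas -/

lemma bhNum_le (N : ℕ) (α : ℝ) (Q : Fin N → ℝ) : bhNumRejections N α Q ≤ N := by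
  classical
  refine Finset.sup_le fun j hj => ?_
  simp only [Finset.mem_filter, Finset.mem_range] at hj
  exact Nat.lt_succ_iff.mp hj.1

lemma bhNum_le_card (N : ℕ) (α : ℝ) (Q : Fin N → ℝ) :
    bhNumRejections N α Q ≤
      (Finset.univ.filter (fun i : Fin N => Q i ≤ (bhNumRejections N α Q : ℝ) * α / N)).card := by
  classical
  set R := bhNumRejections N α Q with hR
  by_cases h : R = 0
  · simp [h]
  · have hne : (((Finset.range (N + 1)).filter
        (fun j : ℕ => j ≤ (Finset.univ.filter (fun i : Fin N => Q i ≤ (j : ℝ) * α / N)).card))).Nonempty := by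
      refine ⟨0, ?_⟩
      simp [Nat.succ_pos]
    obtain ⟨b, hb, hbe⟩ := Finset.exists_mem_eq_sup _ hne id
    simp only [Finset.mem_filter, Finset.mem_range] at hb
    have : R = b := hbe
    rw [this]
    exact hb.2

lemma card_bhRejected (N : ℕ) (α : ℝ) (hα : 0 ≤ α) (Q : Fin N → ℝ) :
    (bhRejected N α Q).card = bhNumRejections N α Q := by
  classical
  set R := bhNumRejections N α Q with hR
  have h1 : R ≤ (bhRejected N α Q).card := bhNum_le_card N α Q
  refine le_antisymm ?_ h1
  set m := (bhRejected N α Q).card with hm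
  have hmN : m ≤ N := by
    calc m ≤ (Finset.univ : Finset (Fin N)).card := Finset.card_le_card (Finset.filter_subset _ _)
    _ = N := by simp
  have hle : (R : ℝ) * α / N ≤ (m : ℝ) * α / N := by
    gcongr
  have hmono : (bhRejected N α Q) ⊆ Finset.univ.filter (fun i : Fin N => Q i ≤ (m : ℝ) * α / N) := by
    intro i hi
    simp only [bhRejected, Finset.mem_filter, Finset.mem_univ, true_and] at hi ⊢
    exact hi.trans hle
  have hmem : m ∈ ((Finset.range (N + 1)).filter
      (fun j : ℕ => j ≤ (Finset.univ.filter (fun i : Fin N => Q i ≤ (j : ℝ) * α / N)).card)) := by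
    simp only [Finset.mem_filter, Finset.mem_range, Nat.lt_succ_iff]
    exact ⟨hmN, hm ▸ Finset.card_le_card hmono⟩
  exact Finset.le_sup (f := id) hmem

lemma bhNum_antitone (N : ℕ) (α : ℝ) {Q Q' : Fin N → ℝ} (h : ∀ i, Q i ≤ Q' i) :
    bhNumRejections N α Q' ≤ bhNumRejections N α Q := by
  classical
  apply Finset.sup_mono
  intro j hj
  simp only [Finset.mem_filter, Finset.mem_range] at hj ⊢
  refine ⟨hj.1, hj.2.trans (Finset.card_le_card ?_)⟩
  intro i hi
  simp only [Finset.mem_filter, Finset.mem_univ, true_and] at hi ⊢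
  exact (h i).trans hi

lemma measurable_finset_sup {β : Type*} [MeasurableSpace β] {ι : Type*} (s : Finset ι)
    (f : ι → β → ℕ) (hf : ∀ i, Measurable (f i)) :
    Measurable (fun b => s.sup (fun i => f i b)) := by
  classical
  induction s using Finset.induction_on with
  | empty => simp only [Finset.sup_empty]; exact measurable_const
  | insert _ _ h ih =>
      simp only [Finset.sup_insert]
      exact Measurable.sup (hf _) ih

lemma measurable_cardfun {β : Type*} [MeasurableSpace β] (N : ℕ) (g : Fin N → β → Prop)
    (hg : ∀ i, MeasurableSet {b | g i b}) [∀ i b, Decidable (g i b)] :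
    Measurable (fun b => (Finset.univ.filter (fun i : Fin N => g i b)).card) := by
  classical
  have : (fun b => (Finset.univ.filter (fun i : Fin N => g i b)).card)
      = fun b => ∑ i : Fin N, if g i b then 1 else 0 := by
    funext b; rw [Finset.card_filter]
  rw [this]
  exact Finset.measurable_sum _ (fun i _ => Measurable.ite (hg i) measurable_const measurable_const)

lemma sup_filter_eq_sup_ite (s : Finset ℕ) (p : ℕ → Prop) [DecidablePred p] :
    (s.filter p).sup id = s.sup (fun j => if p j then j else 0) := by
  classical
  apply le_antisymm
  · refine Finset.sup_le fun j hj => ?_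
    simp only [Finset.mem_filter] at hj
    have : (if p j then j else 0) = j := if_pos hj.2
    exact this ▸ Finset.le_sup (f := fun j => if p j then j else 0) hj.1
  · refine Finset.sup_le fun j hj => ?_
    by_cases h : p j
    · simp only [if_pos h]
      exact Finset.le_sup (f := id) (Finset.mem_filter.mpr ⟨hj, h⟩)
    · simp [if_neg h]

lemma measurable_bhNum (N : ℕ) (α : ℝ) (W : Fin N → ℝ) :
    Measurable (fun p : Fin N → ℝ => bhNumRejections N α (fun i => W i * p i)) := by
  classical
  have hcard : ∀ j : ℕ, Measurable (fun p : Fin N → ℝ =>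
      (Finset.univ.filter (fun i : Fin N => W i * p i ≤ (j : ℝ) * α / N)).card) := by
    intro j
    exact measurable_cardfun N _ (fun i =>
      measurableSet_le ((measurable_pi_apply i).const_mul (W i)) measurable_const)
  have key : (fun p : Fin N → ℝ => bhNumRejections N α (fun i => W i * p i))
      = fun p => (Finset.range (N + 1)).sup (fun j =>
          if j ≤ (Finset.univ.filter (fun i : Fin N => W i * p i ≤ (j : ℝ) * α / N)).card
          then j else 0) := by
    funext p
    exact sup_filter_eq_sup_ite _ _
  rw [key]
  apply measurable_finset_sup
  intro j
  refine Measurable.ite ?_ measurable_const measurable_const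
  exact (hcard j) (by trivial)

lemma mem_bhRejected_iff {N : ℕ} (α : ℝ) (W : Fin N → ℝ) (hW : ∀ j, 0 < W j)
    (p : Fin N → ℝ) (i : Fin N) (hp : p i ≤ 1) :
    i ∈ bhRejected N α (fun j => W j * p j) ↔
      p i ≤ min ((bhNumRejections N α (fun j => W j * p j) : ℝ) * α / ((N : ℝ) * W i)) 1 := by
  classical
  rw [le_min_iff]
  simp only [bhRejected, Finset.mem_filter, Finset.mem_univ, true_and]
  constructor
  · intro h
    refine ⟨?_, hp⟩
    rw [← div_div]
    rw [le_div_iff₀ (hW i)]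
    linarith [h]
  · rintro ⟨h, -⟩
    rw [← div_div, le_div_iff₀ (hW i)] at h
    linarith [h]


/-- Result 1: for PRDS p-values with uniform nulls, the FDR of the level-α weighted BH
procedure with positive deterministic weights `W` is at most `(α/N)·Σ_{i∈I⁰} 1/Wᵢ`. -/
theorem weightedBH_FDR_le_sum_inv_weights
    {Ω : Type*} [MeasurableSpace Ω] (μ : Measure Ω) [IsProbabilityMeasure μ]
    {N : ℕ} (hN : 0 < N) (P : Ω → Fin N → ℝ) (hPmeas : Measurable P)
    (hPrange : ∀ ω i, P ω i ∈ Set.Icc (0 : ℝ) 1)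
    (I0 : Finset (Fin N))
    (hUnif : UniformNulls μ P I0) (hPRDS : PRDSNulls μ P I0)
    (W : Fin N → ℝ) (hWpos : ∀ i, 0 < W i)
    (α : ℝ) (hα : α ∈ Set.Ioo (0 : ℝ) 1) :
    FDR μ N α I0 (fun ω i => W i * P ω i) ≤ α / N * ∑ i ∈ I0, 1 / W i := by
  classical
  obtain ⟨hα0, hα1⟩ := hα
  have hNR : (0 : ℝ) < N := by exact_mod_cast hN
  -- notation
  set R' : (Fin N → ℝ) → ℕ := fun p => bhNumRejections N α (fun j => W j * p j) with hR'
  have hR'meas : Measurable R' := measurable_bhNum N α W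
  set s : Fin N → ℕ → ℝ := fun i k => min ((k : ℝ) * α / ((N : ℝ) * W i)) 1 with hs
  set A : Fin N → ℕ → Set Ω := fun i k => {ω | R' (P ω) = k ∧ P ω i ≤ s i k} with hA
  have hNW : ∀ i, (0:ℝ) < (N:ℝ) * W i := fun i => mul_pos hNR (hWpos i)
  have hs_nonneg : ∀ i k, 0 ≤ s i k := by
    intro i k
    apply le_min
    · exact div_nonneg (mul_nonneg (Nat.cast_nonneg k) hα0.le) (hNW i).le
    · norm_num
  have hs_le1 : ∀ i k, s i k ≤ 1 := fun i k => min_le_right _ _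
  have hs_pos : ∀ i k, 1 ≤ k → 0 < s i k := by
    intro i k hk
    apply lt_min
    · have hk0 : (0:ℝ) < (k:ℝ) := by exact_mod_cast hk
      exact div_pos (mul_pos hk0 hα0) (hNW i)
    · norm_num
  have hs_mono : ∀ i k, s i k ≤ s i (k+1) := by
    intro i k
    apply min_le_min _ le_rfl
    apply div_le_div_of_nonneg_right ?hnum (hNW i).le |>.trans_eq rfl
    case hnum =>
      have : ((k:ℝ)) ≤ ((k:ℝ)+1) := by linarith
      push_cast
      nlinarith [hα0.le]
  -- measurable sets
  have hEmeas : ∀ (i : Fin N) (x : ℝ), MeasurableSet {ω | P ω i ≤ x} := by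
    intro i x
    exact measurableSet_le ((measurable_pi_apply i).comp hPmeas) measurable_const
  have hGmeas : ∀ k : ℕ, MeasurableSet {ω | R' (P ω) ≤ k} := by
    intro k
    exact (hR'meas.comp hPmeas) (by trivial : MeasurableSet {n : ℕ | n ≤ k})
  have hAmeas : ∀ i k, MeasurableSet (A i k) := by
    intro i k
    have h1 : MeasurableSet {ω | R' (P ω) = k} :=
      (hR'meas.comp hPmeas) (by trivial : MeasurableSet {k})
    exact h1.inter (hEmeas i (s i k))
  -- Step 1 : pointwise identity for the FDP
  have hpoint : ∀ ω, FDP N α I0 (fun j => W j * P ω j)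
      = ∑ i ∈ I0, ∑ k ∈ Finset.Icc 1 N, Set.indicator (A i k) (fun _ => ((k:ℝ))⁻¹) ω := by
    intro ω
    set p := P ω with hp
    set Rω := R' p with hRω
    have hcard : (bhRejected N α (fun j => W j * p j)).card = Rω :=
      card_bhRejected N α hα0.le _
    have hmem : ∀ i : Fin N, i ∈ bhRejected N α (fun j => W j * p j) ↔ p i ≤ s i Rω := by
      intro i
      exact mem_bhRejected_iff α W hWpos p i (hPrange ω i).2
    by_cases hR0 : Rω = 0
    · have hrej : bhRejected N α (fun j => W j * p j) = ∅ := by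
        apply Finset.card_eq_zero.mp
        rw [hcard, hR0]
      have : ∀ i ∈ I0, ∀ k ∈ Finset.Icc 1 N, Set.indicator (A i k) (fun _ => ((k:ℝ))⁻¹) ω = 0 := by
        intro i _ k hk
        apply Set.indicator_of_notMem
        simp only [hA, Set.mem_setOf_eq, not_and]
        intro hRk
        exfalso
        rw [← hp] at hRk
        rw [← hRω] at hRk
        simp only [Finset.mem_Icc] at hk
        omega
      rw [Finset.sum_congr rfl (fun i hi => Finset.sum_congr rfl (this i hi))]
      simp [FDP, hrej]
    · have hR1 : 1 ≤ Rω := Nat.one_le_iff_ne_zero.mpr hR0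
      have hRN : Rω ≤ N := bhNum_le N α _
      have hinner : ∀ i ∈ I0, ∑ k ∈ Finset.Icc 1 N, Set.indicator (A i k) (fun _ => ((k:ℝ))⁻¹) ω
          = if i ∈ bhRejected N α (fun j => W j * p j) then ((Rω:ℝ))⁻¹ else 0 := by
        intro i _
        rw [Finset.sum_eq_single Rω]
        · rw [Set.indicator_apply]
          have hiff : (ω ∈ A i Rω) ↔ p i ≤ s i Rω :=
            ⟨fun h => h.2, fun h => ⟨rfl, h⟩⟩
          by_cases hc : p i ≤ s i Rω
          · rw [if_pos (hiff.mpr hc), if_pos ((hmem i).mpr hc)]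
          · rw [if_neg (fun h => hc (hiff.mp h)), if_neg (fun h => hc ((hmem i).mp h))]
        · intro k hk hkR
          apply Set.indicator_of_notMem
          simp only [hA, Set.mem_setOf_eq, not_and, ← hp, ← hRω]
          intro h; exact absurd h.symm hkR
        · intro h
          exact absurd (Finset.mem_Icc.mpr ⟨hR1, hRN⟩) h
      rw [Finset.sum_congr rfl hinner]
      rw [Finset.sum_ite_mem]
      simp only [Finset.sum_const, nsmul_eq_mul]
      rw [FDP]
      rw [hcard]
      have hmax : max ((Rω:ℝ)) 1 = (Rω:ℝ) := by
        apply max_eq_left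
        exact_mod_cast hR1
      rw [hmax, Finset.inter_comm]
      rw [div_eq_mul_inv]
  -- Step 2 : FDR equals sum of measures
  have hFDR : FDR μ N α I0 (fun ω i => W i * P ω i)
      = ∑ i ∈ I0, ∑ k ∈ Finset.Icc 1 N, ((k:ℝ))⁻¹ * (μ (A i k)).toReal := by
    rw [FDR]
    have : (fun ω => FDP N α I0 (fun j => W j * P ω j))
        = fun ω => ∑ i ∈ I0, ∑ k ∈ Finset.Icc 1 N, Set.indicator (A i k) (fun _ => ((k:ℝ))⁻¹) ω :=
      funext hpoint
    rw [this]
    rw [integral_finset_sum _ (fun i _ => integrable_finset_sum _ (fun k _ =>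
      (integrable_const _).indicator (hAmeas i k)))]
    refine Finset.sum_congr rfl fun i _ => ?_
    rw [integral_finset_sum _ (fun k _ => (integrable_const _).indicator (hAmeas i k))]
    refine Finset.sum_congr rfl fun k _ => ?_
    rw [integral_indicator_const _ (hAmeas i k)]
    simp [mul_comm, measureReal_def]
  rw [hFDR]
  -- Step 3 : per-index bound
  have hperi : ∀ i ∈ I0, ∑ k ∈ Finset.Icc 1 N, ((k:ℝ))⁻¹ * (μ (A i k)).toReal
      ≤ α / ((N:ℝ) * W i) := by
    intro i hi
    set E : ℝ → Set Ω := fun x => {ω | P ω i ≤ x} with hE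
    set G : ℕ → Set Ω := fun k => {ω | R' (P ω) ≤ k} with hG
    set a : ℕ → ℝ := fun k => (μ (E (s i k) ∩ G k)).toReal with ha
    set b : ℕ → ℝ := fun k => (μ (E (s i k) ∩ G (k-1))).toReal with hb
    have hmuE : ∀ k, (μ (E (s i k))).toReal = s i k := by
      intro k
      rw [hUnif i hi (s i k) ⟨hs_nonneg i k, hs_le1 i k⟩, ENNReal.toReal_ofReal (hs_nonneg i k)]
    have ha_le : ∀ k, a k ≤ s i k := by
      intro k
      rw [← hmuE k]
      exact ENNReal.toReal_mono (measure_ne_top μ _) (measure_mono Set.inter_subset_left)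
    have ha_nonneg : ∀ k, 0 ≤ a k := fun k => ENNReal.toReal_nonneg
    have hb_nonneg : ∀ k, 0 ≤ b k := fun k => ENNReal.toReal_nonneg
    -- PRDS consequence
    have hkey : ∀ k, 1 ≤ k → a k / s i k ≤ b (k+1) / s i (k+1) := by
      intro k hk
      have hφ : ∀ x : ℝ, 0 < x →
          (∫ ω in E x, Set.indicator {p : Fin N → ℝ | R' p ≤ k} (fun _ => (1:ℝ)) (P ω) ∂μ)
            = (μ (E x ∩ G k)).toReal := by
        intro x hx
        have : (fun ω => Set.indicator {p : Fin N → ℝ | R' p ≤ k} (fun _ => (1:ℝ)) (P ω))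
            = Set.indicator (G k) (fun _ => (1:ℝ)) := by
          funext ω
          simp only [Set.indicator_apply, Set.mem_setOf_eq, hG]
        rw [this]
        rw [setIntegral_indicator (hGmeas k)]
        rw [setIntegral_const]
        simp [measureReal_def, hG]
      have hmono_phi : ∀ p q : Fin N → ℝ, (∀ j, p j ≤ q j) →
          Set.indicator {p : Fin N → ℝ | R' p ≤ k} (fun _ => (1:ℝ)) p ≤
          Set.indicator {p : Fin N → ℝ | R' p ≤ k} (fun _ => (1:ℝ)) q := by
        intro p q hpq
        simp only [Set.indicator_apply, Set.mem_setOf_eq]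
        by_cases hp : R' p ≤ k
        · have hq : R' q ≤ R' p := bhNum_antitone N α (fun j => by
            have := hpq j
            nlinarith [(hWpos j).le])
          rw [if_pos hp, if_pos (hq.trans hp)]
        · rw [if_neg hp]
          positivity
      have hres := hPRDS i hi (Set.indicator {p : Fin N → ℝ | R' p ≤ k} (fun _ => (1:ℝ)))
        (Measurable.indicator measurable_const (hR'meas (by trivial : MeasurableSet {n : ℕ | n ≤ k})))
        ⟨1, fun p => by
          simp only [Set.indicator_apply]
          split <;> simp⟩
        hmono_phi
        (s i k) (s i (k+1)) (hs_pos i k hk) (hs_mono i k) (hs_le1 i (k+1))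
      rw [hφ _ (hs_pos i k hk), hφ _ (hs_pos i (k+1) (by omega))] at hres
      have e1 : (μ {ω | P ω i ≤ s i k}).toReal = s i k := hmuE k
      have e2 : (μ {ω | P ω i ≤ s i (k+1)}).toReal = s i (k+1) := hmuE (k+1)
      rw [e1, e2] at hres
      exact hres
    -- decomposition: measure of A i k
    have hdecomp : ∀ k, 1 ≤ k → (μ (A i k)).toReal = a k - b k := by
      intro k hk
      have hsplit : E (s i k) ∩ G k = (E (s i k) ∩ G (k-1)) ∪ A i k := by
        ext ω
        simp only [Set.mem_inter_iff, Set.mem_union, Set.mem_setOf_eq, hE, hG, hA]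
        constructor
        · rintro ⟨h1, h2⟩
          by_cases hc : R' (P ω) ≤ k - 1
          · exact Or.inl ⟨h1, hc⟩
          · exact Or.inr ⟨by omega, h1⟩
        · rintro (⟨h1, h2⟩ | ⟨h1, h2⟩)
          · exact ⟨h1, by omega⟩
          · exact ⟨h2, by omega⟩
      have hdisj : Disjoint (E (s i k) ∩ G (k-1)) (A i k) := by
        rw [Set.disjoint_left]
        rintro ω ⟨h1, h2⟩ ⟨h3, h4⟩
        simp only [Set.mem_setOf_eq, hG] at h2
        omega
      have := measure_union (μ := μ) hdisj (hAmeas i k)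
      rw [← hsplit] at this
      simp only [ha, hb]
      rw [this]
      rw [ENNReal.toReal_add (measure_ne_top μ _) (measure_ne_top μ _)]
      ring
    -- c-monotonicity
    have hc_mono : ∀ k : ℕ, 1 ≤ k → s i (k+1) * (k:ℝ) ≤ s i k * ((k:ℝ)+1) := by
      intro k hk
      have hk0 : (0:ℝ) < k := by exact_mod_cast hk
      rcases le_or_gt 1 ((k:ℝ) * α / ((N:ℝ) * W i)) with h | h
      · have hsk : s i k = 1 := min_eq_right h
        rw [hsk]
        have h1 := hs_le1 i (k+1)
        have h2 := hs_nonneg i (k+1)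
        nlinarith
      · have hsk : s i k = (k:ℝ) * α / ((N:ℝ) * W i) := min_eq_left h.le
        have h2 : s i (k+1) ≤ ((k:ℝ)+1) * α / ((N:ℝ) * W i) := by
          refine (min_le_left _ _).trans_eq ?_
          push_cast
          ring
        rw [hsk]
        calc s i (k+1) * (k:ℝ) ≤ (((k:ℝ)+1) * α / ((N:ℝ) * W i)) * k := by nlinarith
        _ = ((k:ℝ) * α / ((N:ℝ) * W i)) * ((k:ℝ)+1) := by ring
    -- induction claim
    have hclaim : ∀ n : ℕ, 1 ≤ n →
        ∑ k ∈ Finset.Icc 1 n, ((k:ℝ))⁻¹ * (μ (A i k)).toReal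
          ≤ a n / n + (s i 1 - s i n / n) := by
      intro n hn
      induction n, hn using Nat.le_induction with
      | base =>
          rw [Finset.Icc_self, Finset.sum_singleton, hdecomp 1 le_rfl]
          simp only [Nat.cast_one, inv_one, one_mul, div_one]
          linarith [hb_nonneg 1]
      | succ n hn ih =>
          rw [Finset.sum_Icc_succ_top (by omega : 1 ≤ n + 1)]
          have hn0 : (0:ℝ) < n := by exact_mod_cast hn
          have hn1 : (0:ℝ) < (n:ℝ)+1 := by positivity
          have hsn : 0 < s i n := hs_pos i n hn
          have hsn1 : 0 < s i (n+1) := hs_pos i (n+1) (by omega)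
          have hterm : ((n+1:ℕ):ℝ)⁻¹ * (μ (A i (n+1))).toReal
              = a (n+1) / ((n:ℝ)+1) - b (n+1) / ((n:ℝ)+1) := by
            rw [hdecomp (n+1) (by omega)]
            push_cast
            ring
          rw [hterm]
          -- key polynomial inequality
          have hk := hkey n hn
          have h1 : a n * s i (n+1) ≤ b (n+1) * s i n := by
            rw [div_le_div_iff₀ hsn hsn1] at hk
            exact hk
          have h2 : s i (n+1) * (n:ℝ) ≤ s i n * ((n:ℝ)+1) := hc_mono n hn
          have hpoly : (a n - s i n) * ((n:ℝ)+1) * s i n + s i (n+1) * (n:ℝ) * s i n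
              ≤ b (n+1) * (n:ℝ) * s i n := by
            nlinarith [mul_nonneg (by linarith [ha_le n] : (0:ℝ) ≤ s i n - a n)
              (by linarith : (0:ℝ) ≤ s i n * ((n:ℝ)+1) - s i (n+1) * (n:ℝ)),
              mul_le_mul_of_nonneg_right h1 hn0.le]
          have key2 : a n / n - s i n / n + s i (n+1) / ((n:ℝ)+1) ≤ b (n+1) / ((n:ℝ)+1) := by
            rw [← sub_nonneg]
            have hrepr : b (n+1) / ((n:ℝ)+1) - (a n / n - s i n / n + s i (n+1) / ((n:ℝ)+1))
                = (b (n+1) * (n:ℝ) * s i n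
                    - ((a n - s i n) * ((n:ℝ)+1) * s i n + s i (n+1) * (n:ℝ) * s i n))
                  / ((n:ℝ) * ((n:ℝ)+1) * s i n) := by
              field_simp
            rw [hrepr]
            apply div_nonneg (by linarith) (by positivity)
          push_cast
          linarith [ih, key2]
    -- conclude
    have hfin := hclaim N hN
    have haN : a N / N ≤ s i N / N := by
      exact div_le_div_of_nonneg_right (ha_le N) hNR.le
    have hs1le : s i 1 ≤ α / ((N:ℝ) * W i) := by
      refine (min_le_left _ _).trans_eq ?_
      push_cast
      ring
    linarith
  calc ∑ i ∈ I0, ∑ k ∈ Finset.Icc 1 N, ((k:ℝ))⁻¹ * (μ (A i k)).toReal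
      ≤ ∑ i ∈ I0, α / ((N:ℝ) * W i) := Finset.sum_le_sum hperi
    _ = α / N * ∑ i ∈ I0, 1 / W i := by
        rw [Finset.mul_sum]
        refine Finset.sum_congr rfl fun i _ => ?_
        field_simp
end

section
/- Let P = (P_1,…,P_N) be p-values on a probability space with values in [0,1], let I^0 ⊆ {1,…,N} be the set of indices of true null hypotheses, and suppose Assumption 1 (each P_i with i ∈ I^0 is Uniform(0,1)) and Assumption 2 (PRDS) hold. If the positive deterministic weights W_1,…,W_N satisfy Condition 1, i.e. Σ_{i ∈ I^0} 1/W_i = N, then the level-α weighted BH procedure applied to the weighted p-values W_i·P_i has FDR ≤ α. -/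
open MeasureTheory ProbabilityTheory Finset

namespace BHaux

lemma bh_le (N : ℕ) (α : ℝ) (Q : Fin N → ℝ) : bhNumRejections N α Q ≤ N := by
  apply Finset.sup_le
  intro b hb
  have := (Finset.mem_filter.mp hb).1
  simpa [Nat.lt_succ_iff] using Finset.mem_range.mp this

lemma bh_antitone (N : ℕ) (α : ℝ) (Q Q' : Fin N → ℝ) (h : ∀ i, Q i ≤ Q' i) :
    bhNumRejections N α Q' ≤ bhNumRejections N α Q := by
  apply Finset.sup_mono
  apply Finset.monotone_filter_right
  intro j _ hj
  refine hj.trans (Finset.card_le_card ?_)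
  apply Finset.monotone_filter_right
  intro i _ hi
  exact (h i).trans hi

lemma bh_self_mem (N : ℕ) (α : ℝ) (Q : Fin N → ℝ) :
    bhNumRejections N α Q ≤
      (Finset.univ.filter (fun i : Fin N => Q i ≤ (bhNumRejections N α Q : ℝ) * α / N)).card := by
  set s := ((Finset.range (N + 1)).filter
      (fun j : ℕ => j ≤ (Finset.univ.filter (fun i : Fin N => Q i ≤ (j : ℝ) * α / N)).card)) with hs
  have hne : s.Nonempty := ⟨0, by simp [hs]⟩
  obtain ⟨b, hb, hsup⟩ := Finset.exists_mem_eq_sup s hne id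
  have hR : bhNumRejections N α Q = b := hsup
  rw [hR]
  exact (Finset.mem_filter.mp hb).2

lemma card_bhRejected (N : ℕ) (α : ℝ) (hα : 0 ≤ α) (Q : Fin N → ℝ) :
    (bhRejected N α Q).card = bhNumRejections N α Q := by
  set R := bhNumRejections N α Q with hRdef
  have h1 : R ≤ (bhRejected N α Q).card := bh_self_mem N α Q
  have h2 : (bhRejected N α Q).card ≤ R := by
    set c := (bhRejected N α Q).card with hc
    have hcN : c ≤ N := by
      calc c ≤ (Finset.univ : Finset (Fin N)).card := Finset.card_le_card (Finset.filter_subset _ _)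
      _ = N := by simp
    apply Finset.le_sup (f := id)
    refine Finset.mem_filter.mpr ⟨Finset.mem_range.mpr (Nat.lt_succ_of_le hcN), ?_⟩
    calc c ≤ (Finset.univ.filter (fun i : Fin N => Q i ≤ (c : ℝ) * α / N)).card := by
            rw [hc]
            apply Finset.card_le_card
            apply Finset.monotone_filter_right
            intro i _ hi
            refine hi.trans ?_
            have hRc : (R : ℝ) ≤ (c : ℝ) := Nat.cast_le.mpr h1
            have hN0 : (0:ℝ) ≤ (N:ℝ) := Nat.cast_nonneg N
            rcases eq_or_lt_of_le hN0 with hN | hN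
            · simp [← hN]
            · exact (div_le_div_iff_of_pos_right hN).mpr (mul_le_mul_of_nonneg_right hRc hα)
    _ = _ := rfl
  omega

noncomputable def cnt (N : ℕ) (α : ℝ) (W : Fin N → ℝ) (p : Fin N → ℝ) (j : ℕ) : ℕ :=
  (Finset.univ.filter (fun i : Fin N => W i * p i ≤ (j : ℝ) * α / N)).card

lemma cnt_meas (N : ℕ) (α : ℝ) (W : Fin N → ℝ) (j : ℕ) :
    Measurable (fun p : Fin N → ℝ => cnt N α W p j) := by
  have : (fun p : Fin N → ℝ => cnt N α W p j)
      = fun p => ∑ i : Fin N, if W i * p i ≤ (j : ℝ) * α / N then 1 else 0 := by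
    funext p; exact Finset.card_filter _ _
  rw [this]
  apply Finset.measurable_sum
  intro i _
  apply Measurable.ite ?_ measurable_const measurable_const
  exact measurableSet_le (measurable_const.mul (measurable_pi_apply i)) measurable_const

lemma bh_eq_g (N : ℕ) (α : ℝ) (W : Fin N → ℝ) (p : Fin N → ℝ) :
    bhNumRejections N α (fun i => W i * p i)
      = (Finset.univ.filter (fun j : Fin (N+1) => (j : ℕ) ≤ cnt N α W p (j : ℕ))).sup
          (fun j => (j : ℕ)) := by
  apply le_antisymm
  · apply Finset.sup_le
    intro b hb
    rcases Finset.mem_filter.mp hb with ⟨hb1, hb2⟩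
    have hbN : b < N + 1 := Finset.mem_range.mp hb1
    have hmem : (⟨b, hbN⟩ : Fin (N+1)) ∈
        Finset.univ.filter (fun j : Fin (N+1) => (j : ℕ) ≤ cnt N α W p (j : ℕ)) :=
      Finset.mem_filter.mpr ⟨Finset.mem_univ _, by simpa [cnt] using hb2⟩
    simpa using Finset.le_sup (f := fun j : Fin (N+1) => (j:ℕ)) hmem
  · apply Finset.sup_le
    intro b hb
    rcases Finset.mem_filter.mp hb with ⟨_, hb2⟩
    exact Finset.le_sup (f := id)
      (Finset.mem_filter.mpr ⟨Finset.mem_range.mpr b.isLt, by simpa [cnt] using hb2⟩)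

lemma bh_meas (N : ℕ) (α : ℝ) (W : Fin N → ℝ) :
    Measurable (fun p : Fin N → ℝ => bhNumRejections N α (fun i => W i * p i)) := by
  have : (fun p : Fin N → ℝ => bhNumRejections N α (fun i => W i * p i))
      = (fun v : Fin (N+1) → ℕ =>
          (Finset.univ.filter (fun j : Fin (N+1) => (j : ℕ) ≤ v j)).sup (fun j => (j : ℕ)))
        ∘ (fun p j => cnt N α W p (j : ℕ)) := by
    funext p; exact bh_eq_g N α W p
  rw [this]
  exact (measurable_of_countable _).comp
    (measurable_pi_lambda _ (fun j => cnt_meas N α W (j : ℕ)))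

lemma FDP_eq_sum (N : ℕ) (α : ℝ) (hα0 : 0 < α)
    (W : Fin N → ℝ) (hW : ∀ i, 0 < W i) (I0 : Finset (Fin N))
    (p : Fin N → ℝ) (hp : ∀ i, p i ≤ 1) :
    FDP N α I0 (fun i => W i * p i)
      = ∑ i ∈ I0, ∑ k ∈ Finset.Ico 1 (N+1),
          (if bhNumRejections N α (fun j => W j * p j) = k ∧
              p i ≤ min ((k:ℝ)*α/(N*W i)) 1
           then 1/(k:ℝ) else 0) := by
  classical
  have hcard : (bhRejected N α (fun j => W j * p j)).card
      = bhNumRejections N α (fun j => W j * p j) := card_bhRejected N α hα0.le _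
  set R := bhNumRejections N α (fun j => W j * p j) with hR
  set S := bhRejected N α (fun j => W j * p j) with hS
  have hmemS : ∀ i, i ∈ S ↔ W i * p i ≤ (R:ℝ) * α / N := by
    intro i
    rw [hS, bhRejected, Finset.mem_filter]
    simp [hR]
  rcases Nat.eq_zero_or_pos R with h0 | hpos
  · have hSe : S = ∅ := Finset.card_eq_zero.mp (by rw [hcard, h0])
    have hL : FDP N α I0 (fun i => W i * p i) = 0 := by
      rw [FDP]
      rw [show bhRejected N α (fun i => W i * p i) = S from rfl, hSe]
      simp
    rw [hL]
    symm
    apply Finset.sum_eq_zero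
    intro i _
    apply Finset.sum_eq_zero
    intro k hk
    have hk1 : 1 ≤ k := (Finset.mem_Ico.mp hk).1
    have : ¬ (R = k ∧ p i ≤ min ((k:ℝ)*α/(N*W i)) 1) := by
      rintro ⟨h1, -⟩; omega
    simp only [this, if_false]
  · have hRN : R ≤ N := bh_le N α _
    have hmax : max ((S.card : ℝ)) 1 = (R : ℝ) := by
      rw [hcard]
      exact max_eq_left (by exact_mod_cast hpos)
    have hnum : ((S ∩ I0).card : ℝ) = ∑ i ∈ I0, (if i ∈ S then (1:ℝ) else 0) := by
      have h1 : S ∩ I0 = I0.filter (· ∈ S) := by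
        rw [Finset.filter_mem_eq_inter, Finset.inter_comm]
      rw [h1, Finset.card_filter]
      push_cast
      rfl
    have hFDP : FDP N α I0 (fun i => W i * p i)
        = ∑ i ∈ I0, (if i ∈ S then (1:ℝ) else 0) / (R:ℝ) := by
      rw [FDP]
      rw [show bhRejected N α (fun i => W i * p i) = S from rfl]
      rw [hmax, hnum, Finset.sum_div]
    rw [hFDP]
    apply Finset.sum_congr rfl
    intro i _
    have hiff : (i ∈ S) ↔ p i ≤ min ((R:ℝ)*α/(N*W i)) 1 := by
      rw [hmemS i, le_min_iff]
      constructor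
      · intro h
        refine ⟨?_, hp i⟩
        rw [← div_div]
        rw [le_div_iff₀ (hW i)]
        linarith [h]
      · rintro ⟨h1, -⟩
        rw [← div_div, le_div_iff₀ (hW i)] at h1
        linarith [h1]
    rw [Finset.sum_eq_single_of_mem R
      (Finset.mem_Ico.mpr ⟨hpos, Nat.lt_succ_of_le hRN⟩)]
    · by_cases h : p i ≤ min ((R:ℝ)*α/(N*W i)) 1
      · rw [if_pos (hiff.mpr h), if_pos ⟨rfl, h⟩, one_div]
      · rw [if_neg (fun hc => h (hiff.mp hc)), if_neg (fun hc => h hc.2), zero_div]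
    · intro k _ hkR
      rw [if_neg (fun hc => hkR hc.1.symm)]

lemma min_thresh {c t : ℝ} (hc : 0 < c) (ht : 1 ≤ t) :
    t * min ((t+1)*c) 1 ≤ (t+1) * min (t*c) 1 := by
  rcases le_or_gt ((t+1)*c) 1 with h1 | h1
  · have h2 : t*c ≤ 1 := by nlinarith
    rw [min_eq_left h1, min_eq_left h2]
    exact le_of_eq (by ring)
  · rw [min_eq_right h1.le]
    rcases le_or_gt (t*c) 1 with h2 | h2
    · rw [min_eq_left h2]; nlinarith
    · rw [min_eq_right h2.le]; linarith

end BHaux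

/-- For PRDS p-values with uniform nulls, the level-α weighted BH procedure with positive
deterministic weights satisfying Condition 1 (`Σ_{i∈I⁰} 1/Wᵢ = N`) has FDR ≤ α. -/
theorem weightedBH_FDR_control_of_condition1
    {Ω : Type*} [MeasurableSpace Ω] (μ : Measure Ω) [IsProbabilityMeasure μ]
    {N : ℕ} (hN : 0 < N) (P : Ω → Fin N → ℝ) (hPmeas : Measurable P)
    (hPrange : ∀ ω i, P ω i ∈ Set.Icc (0 : ℝ) 1)
    (I0 : Finset (Fin N))
    (hUnif : UniformNulls μ P I0) (hPRDS : PRDSNulls μ P I0)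
    (W : Fin N → ℝ) (hWpos : ∀ i, 0 < W i)
    (hcond1 : ∑ i ∈ I0, 1 / W i = (N : ℝ))
    (α : ℝ) (hα : α ∈ Set.Ioo (0 : ℝ) 1) :
    FDR μ N α I0 (fun ω i => W i * P ω i) ≤ α := by
  classical
  obtain ⟨hα0, hα1⟩ := hα
  have hN' : (0:ℝ) < N := by exact_mod_cast hN
  set r : (Fin N → ℝ) → ℕ := fun p => bhNumRejections N α (fun i => W i * p i) with hr
  have hrmeas : Measurable r := BHaux.bh_meas N α W
  have hrPmeas : Measurable fun ω => r (P ω) := hrmeas.comp hPmeas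
  have hPi : ∀ i : Fin N, Measurable fun ω => P ω i :=
    fun i => (measurable_pi_apply i).comp hPmeas
  set xm : Fin N → ℕ → ℝ := fun i k => min ((k:ℝ)*α/(N*W i)) 1 with hxm
  set C : Fin N → ℕ → Set Ω := fun i k => {ω | P ω i ≤ xm i k} with hCdef
  set E : Fin N → ℕ → Set Ω := fun i k => {ω | r (P ω) = k} ∩ C i k with hEdef
  set Bg : ℕ → Set Ω := fun k => {ω | k ≤ r (P ω)} with hBgdef
  have hCmeas : ∀ i k, MeasurableSet (C i k) := fun i k => (hPi i) measurableSet_Iic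
  have hBgmeas : ∀ k, MeasurableSet (Bg k) :=
    fun k => hrPmeas ((Set.to_countable _).measurableSet)
  have hEmeas : ∀ i k, MeasurableSet (E i k) :=
    fun i k => (hrPmeas ((Set.to_countable {k}).measurableSet)).inter (hCmeas i k)
  -- Step 1 : FDR as a double sum of measures
  have step1 : FDR μ N α I0 (fun ω i => W i * P ω i)
      = ∑ i ∈ I0, ∑ k ∈ Finset.Ico 1 (N+1), (μ (E i k)).toReal / k := by
    have hptwise : ∀ ω, FDP N α I0 (fun i => W i * P ω i)
        = ∑ i ∈ I0, ∑ k ∈ Finset.Ico 1 (N+1),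
            (E i k).indicator (fun _ => 1/(k:ℝ)) ω := by
      intro ω
      rw [BHaux.FDP_eq_sum N α hα0 W hWpos I0 (P ω) (fun i => (hPrange ω i).2)]
      refine Finset.sum_congr rfl fun i _ => Finset.sum_congr rfl fun k _ => ?_
      rw [Set.indicator_apply]
      by_cases h : r (P ω) = k ∧ P ω i ≤ xm i k
      · rw [if_pos h, if_pos (by exact ⟨h.1, h.2⟩)]
      · rw [if_neg h, if_neg (fun hc => h ⟨hc.1, hc.2⟩)]
    rw [FDR]
    have : ∫ ω, FDP N α I0 (fun i => W i * P ω i) ∂μ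
        = ∫ ω, ∑ i ∈ I0, ∑ k ∈ Finset.Ico 1 (N+1),
            (E i k).indicator (fun _ => 1/(k:ℝ)) ω ∂μ := by
      congr 1
      funext ω
      exact hptwise ω
    rw [this, integral_finset_sum]
    · refine Finset.sum_congr rfl fun i _ => ?_
      rw [integral_finset_sum]
      · refine Finset.sum_congr rfl fun k _ => ?_
        rw [integral_indicator_const _ (hEmeas i k), smul_eq_mul, mul_one_div]; rfl
      · exact fun k _ => (integrable_const _).indicator (hEmeas i k)
    · intro i _
      exact integrable_finset_sum _ fun k _ => (integrable_const _).indicator (hEmeas i k)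
  -- Step 2 : per-null-index bound
  have step2 : ∀ i ∈ I0,
      ∑ k ∈ Finset.Ico 1 (N+1), (μ (E i k)).toReal / k ≤ α / N * (1 / W i) := by
    intro i hi
    set c : ℝ := α / (N * W i) with hc
    have hcpos : 0 < c := div_pos hα0 (mul_pos hN' (hWpos i))
    have hxmk : ∀ k : ℕ, xm i k = min ((k:ℝ)*c) 1 := by
      intro k; simp only [hxm, hc]; rw [mul_div_assoc]
    have hxm_pos : ∀ k : ℕ, 1 ≤ k → 0 < xm i k := by
      intro k hk
      rw [hxmk]
      apply lt_min
      · have : (1:ℝ) ≤ (k:ℝ) := by exact_mod_cast hk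
        nlinarith
      · norm_num
    have hxm_nonneg : ∀ k : ℕ, 0 ≤ xm i k := by
      intro k; rw [hxmk]; positivity
    have hxm_le_one : ∀ k : ℕ, xm i k ≤ 1 := fun k => by rw [hxmk]; exact min_le_right _ _
    have hxm_mono : ∀ k : ℕ, xm i k ≤ xm i (k+1) := by
      intro k
      rw [hxmk, hxmk]
      apply min_le_min _ le_rfl
      push_cast
      nlinarith
    set A : ℕ → ℝ := fun k => (μ (C i k ∩ Bg k)).toReal with hA
    set Bq : ℕ → ℝ := fun k => (μ (C i k ∩ Bg (k+1))).toReal with hB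
    have hAnn : ∀ k, 0 ≤ A k := fun k => ENNReal.toReal_nonneg
    have hBnn : ∀ k, 0 ≤ Bq k := fun k => ENNReal.toReal_nonneg
    have hBgsub : ∀ k, Bg (k+1) ⊆ Bg k := by
      intro k ω hω
      simp only [hBgdef, Set.mem_setOf_eq] at *
      omega
    have hBA : ∀ k, Bq k ≤ A k := by
      intro k
      apply ENNReal.toReal_mono (measure_ne_top μ _)
      exact measure_mono (Set.inter_subset_inter_right _ (hBgsub k))
    have hterm : ∀ k : ℕ, (μ (E i k)).toReal = A k - Bq k := by
      intro k
      have hset : E i k = (C i k ∩ Bg k) \ (C i k ∩ Bg (k+1)) := by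
        ext ω
        simp only [hEdef, hBgdef, Set.mem_inter_iff, Set.mem_diff, Set.mem_setOf_eq]
        constructor
        · rintro ⟨h1, h2⟩
          exact ⟨⟨h2, by omega⟩, fun hc => by omega⟩
        · rintro ⟨⟨h2, h3⟩, h4⟩
          refine ⟨?_, h2⟩
          by_contra hne
          exact h4 ⟨h2, by omega⟩
      have hsub : C i k ∩ Bg (k+1) ⊆ C i k ∩ Bg k :=
        Set.inter_subset_inter_right _ (hBgsub k)
      rw [hset, measure_diff hsub ((hCmeas i k).inter (hBgmeas (k+1))).nullMeasurableSet
        (measure_ne_top μ _)]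
      rw [ENNReal.toReal_sub_of_le (measure_mono hsub) (measure_ne_top μ _)]
    -- key PRDS inequality
    have hkey : ∀ k : ℕ, 1 ≤ k → A (k+1) / ((k:ℝ)+1) ≤ Bq k / k := by
      intro k hk
      set x := xm i k with hx
      set y := xm i (k+1) with hy
      have hx0 : 0 < x := hxm_pos k hk
      have hy0 : 0 < y := hxm_pos (k+1) (by omega)
      have hxy : x ≤ y := hxm_mono k
      have hx1 : x ≤ 1 := hxm_le_one k
      have hy1 : y ≤ 1 := hxm_le_one (k+1)
      set φ : (Fin N → ℝ) → ℝ := fun p => 1 - (if k+1 ≤ r p then (1:ℝ) else 0) with hφ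
      have hSmeas : MeasurableSet {p : Fin N → ℝ | k+1 ≤ r p} :=
        hrmeas ((Set.to_countable _).measurableSet)
      have hφmeas : Measurable φ := by
        apply Measurable.sub measurable_const
        exact Measurable.ite hSmeas measurable_const measurable_const
      have hφbd : ∃ Cb, ∀ p, |φ p| ≤ Cb := ⟨1, fun p => by
        simp only [hφ]; split_ifs <;> norm_num⟩
      have hφmono : ∀ p q : Fin N → ℝ, (∀ j, p j ≤ q j) → φ p ≤ φ q := by
        intro p q hpq
        have hrq : r q ≤ r p :=
          BHaux.bh_antitone N α _ _ (fun j => mul_le_mul_of_nonneg_left (hpq j) (hWpos j).le)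
        simp only [hφ]
        have hite : (if k+1 ≤ r q then (1:ℝ) else 0) ≤ (if k+1 ≤ r p then (1:ℝ) else 0) := by
          split_ifs with h1 h2
          · exact le_refl _
          · exact absurd (h1.trans hrq) h2
          · norm_num
          · exact le_refl _
        linarith
      have hprds := hPRDS i hi φ hφmeas hφbd hφmono x y hx0 hxy hy1
      have hcompute : ∀ z : ℝ, 0 ≤ z → z ≤ 1 →
          (∫ ω in {ω | P ω i ≤ z}, φ (P ω) ∂μ)
            = z - (μ ({ω | P ω i ≤ z} ∩ Bg (k+1))).toReal := by
        intro z hz0 hz1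
        have hfun : ∀ ω : Ω, φ (P ω) = 1 - (Bg (k+1)).indicator (fun _ => (1:ℝ)) ω := by
          intro ω
          simp only [hφ, Set.indicator_apply, hBgdef, Set.mem_setOf_eq]
        simp_rw [hfun]
        rw [integral_sub (integrableOn_const (C := (1:ℝ)) (s := {ω | P ω i ≤ z}) (measure_ne_top μ _))
            (((integrable_const (1:ℝ)).indicator (hBgmeas (k+1))).integrableOn)]
        rw [setIntegral_const, setIntegral_indicator (hBgmeas (k+1)), setIntegral_const]
        rw [Measure.real, Measure.real, hUnif i hi z ⟨hz0, hz1⟩]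
        simp [ENNReal.toReal_ofReal hz0]
      rw [hcompute x hx0.le hx1, hcompute y hy0.le hy1,
        hUnif i hi x ⟨hx0.le, hx1⟩, hUnif i hi y ⟨hy0.le, hy1⟩,
        ENNReal.toReal_ofReal hx0.le, ENNReal.toReal_ofReal hy0.le] at hprds
      set u := (μ ({ω | P ω i ≤ x} ∩ Bg (k+1))).toReal with hu
      set v := (μ ({ω | P ω i ≤ y} ∩ Bg (k+1))).toReal with hv
      have hueq : Bq k = u := by rw [hB, hu, hCdef]
      have hveq : A (k+1) = v := by rw [hA, hv, hCdef]
      have hunn : 0 ≤ u := ENNReal.toReal_nonneg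
      have hvnn : 0 ≤ v := ENNReal.toReal_nonneg
      rw [sub_div, sub_div, div_self hx0.ne', div_self hy0.ne'] at hprds
      have hvy : v / y ≤ u / x := by linarith
      have hvx : v * x ≤ u * y := (div_le_div_iff₀ hy0 hx0).mp hvy
      have hk1 : (1:ℝ) ≤ (k:ℝ) := by exact_mod_cast hk
      have hthresh : (k:ℝ) * y ≤ ((k:ℝ)+1) * x := by
        have := BHaux.min_thresh hcpos hk1
        rw [hx, hy, hxmk k, hxmk (k+1)]
        push_cast
        convert this using 3 <;> ring
      rw [hueq, hveq, div_le_div_iff₀ (by positivity) (Nat.cast_pos.mpr hk : (0:ℝ) < (k:ℝ))]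
      nlinarith [mul_le_mul_of_nonneg_right hvx (Nat.cast_nonneg k : (0:ℝ) ≤ (k:ℝ)),
        mul_le_mul_of_nonneg_left hthresh hunn, hx0]
    -- telescoping
    have tele : ∀ j m : ℕ, 1 ≤ m → N + 1 ≤ m + j →
        ∑ k ∈ Finset.Ico m (N+1), (μ (E i k)).toReal / k ≤ A m / m := by
      intro j
      induction j with
      | zero =>
        intro m hm hNm
        rw [Finset.Ico_eq_empty (by omega)]
        simp only [Finset.sum_empty]
        positivity
      | succ j ih =>
        intro m hm hNm
        by_cases hmN : N + 1 ≤ m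
        · rw [Finset.Ico_eq_empty (by omega)]
          simp only [Finset.sum_empty]
          positivity
        · rw [Finset.sum_eq_sum_Ico_succ_bot (by omega : m < N + 1)]
          have h2 := ih (m+1) (by omega) (by omega)
          have h3 : A (m+1) / ((m:ℝ)+1) ≤ Bq m / m := hkey m hm
          have hm' : (0:ℝ) < m := by exact_mod_cast hm
          have hcast : ((m+1 : ℕ):ℝ) = (m:ℝ)+1 := by push_cast; ring
          rw [hcast] at h2
          calc (μ (E i m)).toReal / m
                + ∑ k ∈ Finset.Ico (m+1) (N+1), (μ (E i k)).toReal / k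
              ≤ (A m - Bq m) / m + A (m+1) / ((m:ℝ)+1) := by
                rw [hterm m]; linarith
            _ ≤ (A m - Bq m) / m + Bq m / m := by linarith
            _ = A m / m := by rw [← add_div, sub_add_cancel]
    have hfinal := tele (N+1) 1 le_rfl (by omega)
    calc ∑ k ∈ Finset.Ico 1 (N+1), (μ (E i k)).toReal / k ≤ A 1 / 1 := by
          simpa using hfinal
      _ = A 1 := div_one _
      _ ≤ (μ (C i 1)).toReal := by
          apply ENNReal.toReal_mono (measure_ne_top μ _)
          exact measure_mono Set.inter_subset_left
      _ = xm i 1 := by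
          rw [hCdef]
          rw [hUnif i hi (xm i 1) ⟨hxm_nonneg 1, hxm_le_one 1⟩]
          exact ENNReal.toReal_ofReal (hxm_nonneg 1)
      _ ≤ c := by
          rw [hxmk 1]
          push_cast
          simpa using min_le_left c 1
      _ = α / N * (1 / W i) := by rw [hc, mul_one_div, div_div]
  rw [step1]
  calc ∑ i ∈ I0, ∑ k ∈ Finset.Ico 1 (N+1), (μ (E i k)).toReal / k
      ≤ ∑ i ∈ I0, α / N * (1 / W i) := Finset.sum_le_sum step2
    _ = α / N * ∑ i ∈ I0, 1 / W i := (Finset.mul_sum _ _ _).symm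
    _ = α := by
        rw [hcond1]
        field_simp
end

section
/- (Lemma 1, non-overlapping case) Consider a hierarchical classification of {1,…,N} in L ≥ 1 levels of non-overlapping groups: the level-0 group is G(∅) = {1,…,N}, and each level-(l−1) group G(g_1⋯g_{l−1}) is partitioned into nonempty level-l groups G(g_1⋯g_{l−1}g_l), g_l = 1,…,m_l(g_1⋯g_{l−1}). For a group G let n_G = |G|, n^0_G = |G ∩ I^0|, π^0_G = n^0_G/n_G, and let π^0 = |I^0|/N. Assume 0 < π^0 < 1 and 0 < π^0_G < 1 for every group G at every level. Define weights recursively by w_∅ = π^0, w_{g_1} = (1−π^0)·π^0_{G(g_1)}/(1−π^0_{G(g_1)}), and for l ≥ 2, w_{g_1⋯g_l} = w_{g_1⋯g_{l−2}} · ((1−π^0_{G(g_1⋯g_{l−1})})/π^0_{G(g_1⋯g_{l−1})}) · (π^0_{G(g_1⋯g_l)}/(1−π^0_{G(g_1⋯g_l)})). Then the weights W_i = w_{g_1⋯g_L} for i ∈ G(g_1⋯g_L) satisfy Condition 1: Σ_{i ∈ I^0} 1/W_i = N; equivalently, Σ over all level-L index tuples (g_1,…,g_L) of n^0_{G(g_1⋯g_L)}/w_{g_1⋯g_L}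 = N. -/
open MeasureTheory ProbabilityTheory Finset

/-- Lemma 1 (non-overlapping case): in a hierarchical classification of `{1,…,N}` in `L ≥ 1`
levels of nested partitions (where `A l i` denotes the level-`l` group containing index `i`),
the recursively defined hierarchical weights satisfy Condition 1. -/
theorem heirGBH_weights_condition1
    {N : ℕ} (hN : 0 < N) (L : ℕ) (hL : 1 ≤ L) (I0 : Finset (Fin N))
    (A : ℕ → Fin N → Finset (Fin N))
    (hA0 : ∀ i, A 0 i = Finset.univ)
    (hmem : ∀ l i, i ∈ A l i)
    (hpart : ∀ l, ∀ i j : Fin N, j ∈ A l i → A l j = A l i)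
    (hnest : ∀ l i, A (l + 1) i ⊆ A l i)
    (prop : Finset (Fin N) → ℝ)
    (hprop : ∀ G, prop G = ((G ∩ I0).card : ℝ) / (G.card : ℝ))
    (pi0 : ℝ) (hpi0 : pi0 = (I0.card : ℝ) / (N : ℝ)) (hpi0mem : 0 < pi0 ∧ pi0 < 1)
    (hpropmem : ∀ l, l ≤ L → ∀ i, 0 < prop (A l i) ∧ prop (A l i) < 1)
    (w : ℕ → Fin N → ℝ)
    (hw0 : ∀ i, w 0 i = pi0)
    (hw1 : ∀ i, w 1 i = (1 - pi0) * prop (A 1 i) / (1 - prop (A 1 i)))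
    (hwrec : ∀ l, l + 2 ≤ L → ∀ i,
      w (l + 2) i = w l i * ((1 - prop (A (l + 1) i)) / prop (A (l + 1) i)) *
        (prop (A (l + 2) i) / (1 - prop (A (l + 2) i)))) :
    ∑ i ∈ I0, 1 / w L i = (N : ℝ) := by
  classical
  have hNR : (0:ℝ) < (N:ℝ) := by exact_mod_cast hN
  have hsubset : ∀ m l, m ≤ l → ∀ i, A l i ⊆ A m i := by
    intro m l hml
    induction l, hml using Nat.le_induction with
    | base => intro i; exact subset_rfl
    | succ l hml ih => intro i; exact (hnest l i).trans (ih i)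
  have hsym : ∀ l (i j : Fin N), j ∈ A l i ↔ i ∈ A l j := by
    intro l i j
    constructor
    · intro h; rw [hpart l i j h]; exact hmem l i
    · intro h; rw [hpart l j i h]; exact hmem l j
  have hAeq : ∀ l m (i j : Fin N), m ≤ l → j ∈ A l i → A m j = A m i := by
    intro l m i j hm hj
    exact hpart m i j (hsubset m l hm i hj)
  have hcard : ∀ l, l ≤ L → ∀ i,
      0 < (A l i ∩ I0).card ∧ (A l i ∩ I0).card < (A l i).card := by
    intro l hl i
    obtain ⟨h1, h2⟩ := hpropmem l hl i
    rw [hprop] at h1 h2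
    have hn : 0 < (A l i).card := Finset.card_pos.2 ⟨i, hmem l i⟩
    have hnR : (0:ℝ) < ((A l i).card : ℝ) := by exact_mod_cast hn
    have ha : 0 < (A l i ∩ I0).card := by
      by_contra h
      push_neg at h
      have h0 : (A l i ∩ I0).card = 0 := Nat.le_zero.1 h
      rw [h0] at h1
      simp at h1
    refine ⟨ha, ?_⟩
    have := (div_lt_one hnR).1 h2
    exact_mod_cast this
  have hswap : ∀ l (S T : Finset (Fin N)) (F : Fin N → Fin N → ℝ),
      ∑ i ∈ S, ∑ j ∈ A l i ∩ T, F i j = ∑ j ∈ T, ∑ i ∈ A l j ∩ S, F i j := by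
    intro l S T F
    calc ∑ i ∈ S, ∑ j ∈ A l i ∩ T, F i j
        = ∑ i ∈ S, ∑ j ∈ T, if j ∈ A l i then F i j else 0 := by
          refine Finset.sum_congr rfl fun i _ => ?_
          rw [Finset.inter_comm, ← Finset.filter_mem_eq_inter, Finset.sum_filter]
      _ = ∑ j ∈ T, ∑ i ∈ S, if j ∈ A l i then F i j else 0 := Finset.sum_comm
      _ = ∑ j ∈ T, ∑ i ∈ A l j ∩ S, F i j := by
          refine Finset.sum_congr rfl fun j _ => ?_
          rw [Finset.inter_comm, ← Finset.filter_mem_eq_inter, Finset.sum_filter]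
          refine Finset.sum_congr rfl fun i _ => ?_
          by_cases h : j ∈ A l i
          · rw [if_pos h, if_pos ((hsym l i j).1 h)]
          · rw [if_neg h, if_neg (fun h' => h ((hsym l j i).1 h'))]
  have hcompl : ∀ l (i : Fin N), (A l i ∩ I0ᶜ).card = (A l i).card - (A l i ∩ I0).card := by
    intro l i
    have h1 := Finset.card_inter_add_card_sdiff (A l i) I0
    have h2 : A l i \ I0 = A l i ∩ I0ᶜ := sdiff_eq
    rw [h2] at h1
    omega
  have lemA : ∀ l, l ≤ L → ∀ f : Fin N → ℝ, (∀ i j : Fin N, j ∈ A l i → f j = f i) →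
      ∑ i ∈ I0, f i * ((1 - prop (A l i)) / prop (A l i)) = ∑ j ∈ I0ᶜ, f j := by
    intro l hl f hf
    have key : ∀ i : Fin N, f i * ((1 - prop (A l i)) / prop (A l i))
        = ∑ j ∈ A l i ∩ I0ᶜ, f i / ((A l i ∩ I0).card : ℝ) := by
      intro i
      obtain ⟨ha, hab⟩ := hcard l hl i
      rw [Finset.sum_const, nsmul_eq_mul, hcompl l i, hprop, Nat.cast_sub hab.le]
      have haR : ((A l i ∩ I0).card : ℝ) ≠ 0 := by
        exact_mod_cast ha.ne'
      have hnR : ((A l i).card : ℝ) ≠ 0 := by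
        have : 0 < (A l i).card := lt_trans ha hab
        exact_mod_cast this.ne'
      field_simp
    calc ∑ i ∈ I0, f i * ((1 - prop (A l i)) / prop (A l i))
        = ∑ i ∈ I0, ∑ j ∈ A l i ∩ I0ᶜ, f i / ((A l i ∩ I0).card : ℝ) :=
          Finset.sum_congr rfl fun i _ => key i
      _ = ∑ j ∈ I0ᶜ, ∑ i ∈ A l j ∩ I0, f i / ((A l i ∩ I0).card : ℝ) := by
          have := hswap l I0 I0ᶜ (fun i j => f i / ((A l i ∩ I0).card : ℝ))
          exact this
      _ = ∑ j ∈ I0ᶜ, f j := by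
          refine Finset.sum_congr rfl fun j _ => ?_
          obtain ⟨ha, _⟩ := hcard l hl j
          have haR : ((A l j ∩ I0).card : ℝ) ≠ 0 := by exact_mod_cast ha.ne'
          have h2 : ∑ i ∈ A l j ∩ I0, f i / ((A l i ∩ I0).card : ℝ)
              = ∑ i ∈ A l j ∩ I0, f j / ((A l j ∩ I0).card : ℝ) := by
            refine Finset.sum_congr rfl fun i hi => ?_
            have hij : i ∈ A l j := (Finset.mem_inter.1 hi).1
            rw [hf j i hij, hpart l j i hij]
          rw [h2, Finset.sum_const, nsmul_eq_mul]
          field_simp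
  have lemB : ∀ l, l ≤ L → ∀ g : Fin N → ℝ, (∀ i j : Fin N, j ∈ A l i → g j = g i) →
      ∑ j ∈ I0ᶜ, g j * (prop (A l j) / (1 - prop (A l j))) = ∑ k ∈ I0, g k := by
    intro l hl g hg
    have key : ∀ j : Fin N, g j * (prop (A l j) / (1 - prop (A l j)))
        = ∑ k ∈ A l j ∩ I0, g j / (((A l j).card : ℝ) - ((A l j ∩ I0).card : ℝ)) := by
      intro j
      obtain ⟨ha, hab⟩ := hcard l hl j
      rw [Finset.sum_const, nsmul_eq_mul, hprop]
      have haR : ((A l j ∩ I0).card : ℝ) ≠ 0 := by exact_mod_cast ha.ne'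
      have hnR : ((A l j).card : ℝ) ≠ 0 := by
        have : 0 < (A l j).card := lt_trans ha hab
        exact_mod_cast this.ne'
      have hdR : ((A l j).card : ℝ) - ((A l j ∩ I0).card : ℝ) ≠ 0 := by
        have : ((A l j ∩ I0).card : ℝ) < ((A l j).card : ℝ) := by exact_mod_cast hab
        linarith
      have hone : 1 - ((A l j ∩ I0).card : ℝ) / ((A l j).card : ℝ)
          = (((A l j).card : ℝ) - ((A l j ∩ I0).card : ℝ)) / ((A l j).card : ℝ) := by
        field_simp
      rw [hone]
      field_simp [hnR, hdR]
    calc ∑ j ∈ I0ᶜ, g j * (prop (A l j) / (1 - prop (A l j)))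
        = ∑ j ∈ I0ᶜ, ∑ k ∈ A l j ∩ I0, g j / (((A l j).card : ℝ) - ((A l j ∩ I0).card : ℝ)) :=
          Finset.sum_congr rfl fun j _ => key j
      _ = ∑ k ∈ I0, ∑ j ∈ A l k ∩ I0ᶜ, g j / (((A l j).card : ℝ) - ((A l j ∩ I0).card : ℝ)) := by
          have := hswap l I0ᶜ I0 (fun j k => g j / (((A l j).card : ℝ) - ((A l j ∩ I0).card : ℝ)))
          exact this
      _ = ∑ k ∈ I0, g k := by
          refine Finset.sum_congr rfl fun k _ => ?_
          obtain ⟨ha, hab⟩ := hcard l hl k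
          have hdR : ((A l k).card : ℝ) - ((A l k ∩ I0).card : ℝ) ≠ 0 := by
            have : ((A l k ∩ I0).card : ℝ) < ((A l k).card : ℝ) := by exact_mod_cast hab
            linarith
          have h2 : ∑ j ∈ A l k ∩ I0ᶜ, g j / (((A l j).card : ℝ) - ((A l j ∩ I0).card : ℝ))
              = ∑ j ∈ A l k ∩ I0ᶜ, g k / (((A l k).card : ℝ) - ((A l k ∩ I0).card : ℝ)) := by
            refine Finset.sum_congr rfl fun j hj => ?_
            have hjk : j ∈ A l k := (Finset.mem_inter.1 hj).1
            rw [hg k j hjk, hpart l k j hjk]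
          rw [h2, Finset.sum_const, nsmul_eq_mul, hcompl l k, Nat.cast_sub hab.le]
          field_simp
  have hwclass : ∀ m, m ≤ L → ∀ i j : Fin N, (∀ k, k ≤ m → A k j = A k i) → w m j = w m i := by
    intro m
    induction m using Nat.strong_induction_on with
    | _ m ih =>
      match m, ih with
      | 0, _ => intro _ i j _; rw [hw0, hw0]
      | 1, _ => intro _ i j h; rw [hw1, hw1, h 1 le_rfl]
      | (k+2), ih =>
        intro hm i j h
        rw [hwrec k hm i, hwrec k hm j, h (k+1) (by omega), h (k+2) le_rfl,
          ih k (by omega) (by omega) i j (fun a ha => h a (by omega))]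
  have hI0pos : 0 < I0.card := by
    by_contra h
    push_neg at h
    have h0 : I0.card = 0 := Nat.le_zero.1 h
    rw [hpi0, h0] at hpi0mem
    simp at hpi0mem
  have hI0lt : I0.card < N := by
    have h2 := hpi0mem.2
    rw [hpi0] at h2
    have := (div_lt_one hNR).1 h2
    exact_mod_cast this
  have main : ∀ l, l ≤ L → ∑ i ∈ I0, 1 / w l i = (N : ℝ) := by
    intro l
    induction l using Nat.strong_induction_on with
    | _ l ih =>
      match l, ih with
      | 0, _ =>
        intro _
        have hc : ((I0.card : ℝ)) ≠ 0 := by exact_mod_cast hI0pos.ne'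
        simp only [hw0]
        rw [Finset.sum_const, nsmul_eq_mul, hpi0]
        field_simp
      | 1, _ =>
        intro h1
        have hpi0ne : (1 : ℝ) - pi0 ≠ 0 := by linarith [hpi0mem.2]
        have hstep : ∑ i ∈ I0, 1 / w 1 i
            = ∑ i ∈ I0, (1/(1-pi0)) * ((1 - prop (A 1 i)) / prop (A 1 i)) := by
          refine Finset.sum_congr rfl fun i _ => ?_
          rw [hw1]
          simp only [div_eq_mul_inv, mul_inv, inv_inv, one_mul]
          ring
        rw [hstep, lemA 1 h1 (fun _ => 1/(1-pi0)) (fun _ _ _ => rfl)]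
        rw [Finset.sum_const, nsmul_eq_mul, Finset.card_compl, Fintype.card_fin,
          Nat.cast_sub hI0lt.le]
        rw [hpi0]
        have hc : ((I0.card : ℝ)) ≠ 0 := by exact_mod_cast hI0pos.ne'
        have hd : (N : ℝ) - (I0.card : ℝ) ≠ 0 := by
          have : (I0.card : ℝ) < (N : ℝ) := by exact_mod_cast hI0lt
          linarith
        field_simp
      | (k+2), ih =>
        intro hk2
        have hk : k ≤ L := by omega
        have hk1 : k + 1 ≤ L := by omega
        have hf : ∀ i j : Fin N, j ∈ A (k+2) i →
            (1 / w k j) * (prop (A (k+1) j) / (1 - prop (A (k+1) j)))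
              = (1 / w k i) * (prop (A (k+1) i) / (1 - prop (A (k+1) i))) := by
          intro i j hj
          have h1 : A (k+1) j = A (k+1) i := hAeq (k+2) (k+1) i j (by omega) hj
          have h2 : w k j = w k i :=
            hwclass k hk i j (fun m hm => hAeq (k+2) m i j (by omega) hj)
          rw [h1, h2]
        have hg : ∀ i j : Fin N, j ∈ A (k+1) i → 1 / w k j = 1 / w k i := by
          intro i j hj
          rw [hwclass k hk i j (fun m hm => hAeq (k+1) m i j (by omega) hj)]
        calc ∑ i ∈ I0, 1 / w (k+2) i
            = ∑ i ∈ I0, ((1 / w k i) * (prop (A (k+1) i) / (1 - prop (A (k+1) i)))) *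
                ((1 - prop (A (k+2) i)) / prop (A (k+2) i)) := by
              refine Finset.sum_congr rfl fun i _ => ?_
              rw [hwrec k hk2 i]
              simp only [div_eq_mul_inv, mul_inv, inv_inv, one_mul]
              ring
          _ = ∑ j ∈ I0ᶜ, (1 / w k j) * (prop (A (k+1) j) / (1 - prop (A (k+1) j))) :=
              lemA (k+2) hk2 _ hf
          _ = ∑ i ∈ I0, 1 / w k i := lemB (k+1) hk1 _ hg
          _ = (N : ℝ) := ih k (by omega) hk
  exact main L le_rfl
end

section
/- (Lemma 2) Let S ≥ 2 classification criteria each partition {1,…,N}: classification s partitions {1,…,N} into nonempty groups indexed by g_s = 1,…,M_s, and g_s(i) denotes the group of index i under classification s. Let π^0_{g_s} be the proportion of true nulls in group g_s and π^0 = |I^0|/N, and assume 0 < π^0 < 1 and 0 < π^0_{g_s} < 1 for every group of every classification. Define w_{g_s} = π^0_{g_s}·(1−π^0)/(1−π^0_{g_s}) and define W_i by 1/W_i = (1/S)·Σ_{s=1}^S 1/w_{g_s(i)}. Then these weights satisfy Condition 1: Σ_{i ∈ I^0} 1/W_i = N. -/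
open MeasureTheory ProbabilityTheory Finset

/-- Lemma 2: the oracle S-way GBH weights satisfy Condition 1.  Here `c s i` is the group
containing index `i` under classification `s`. -/
theorem sWayGBH_weights_condition1
    {N S : ℕ} (hS : 2 ≤ S) (hN : 0 < N) (I0 : Finset (Fin N))
    (c : Fin S → Fin N → Finset (Fin N))
    (hmem : ∀ s i, i ∈ c s i)
    (hpart : ∀ s, ∀ i j : Fin N, j ∈ c s i → c s j = c s i)
    (pi0 : ℝ) (hpi0 : pi0 = (I0.card : ℝ) / (N : ℝ)) (hpi0mem : 0 < pi0 ∧ pi0 < 1)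
    (prop : Finset (Fin N) → ℝ)
    (hprop : ∀ g : Finset (Fin N), prop g = ((g ∩ I0).card : ℝ) / (g.card : ℝ))
    (hpropmem : ∀ s i, 0 < prop (c s i) ∧ prop (c s i) < 1)
    (w : Fin S → Fin N → ℝ)
    (hw : ∀ s i, w s i = prop (c s i) * (1 - pi0) / (1 - prop (c s i)))
    (W : Fin N → ℝ)
    (hW : ∀ i, 1 / W i = (1 / (S : ℝ)) * ∑ s, 1 / w s i) :
    ∑ i ∈ I0, 1 / W i = (N : ℝ) := by
  have hNpos : (0:ℝ) < N := by exact_mod_cast hN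
  have h1pi0pos : 0 < 1 - pi0 := by linarith [hpi0mem.2]
  have h1pi0 : 1 - pi0 = ((N : ℝ) - I0.card) / N := by
    rw [hpi0]; field_simp
  have key : ∀ s : Fin S, ∑ i ∈ I0, 1 / w s i = (N : ℝ) := by
    intro s
    set T := Finset.image (c s) Finset.univ with hT
    have hmapsU : ∀ i : Fin N, i ∈ Finset.univ → c s i ∈ T :=
      fun i _ => Finset.mem_image_of_mem _ (Finset.mem_univ i)
    have hmaps : ∀ i ∈ I0, c s i ∈ T := fun i _ => hmapsU i (Finset.mem_univ i)
    have hiff : ∀ g ∈ T, ∀ i : Fin N, c s i = g ↔ i ∈ g := by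
      intro g hg i
      obtain ⟨j, -, rfl⟩ := Finset.mem_image.mp hg
      constructor
      · intro h; rw [← h]; exact hmem s i
      · intro h; exact hpart s j i h
    have hfiltU : ∀ g ∈ T, Finset.univ.filter (fun i => c s i = g) = g := by
      intro g hg; ext i
      simp [Finset.mem_filter, hiff g hg i]
    have hfiltI0 : ∀ g ∈ T, I0.filter (fun i => c s i = g) = g ∩ I0 := by
      intro g hg; ext i
      simp only [Finset.mem_filter, Finset.mem_inter, hiff g hg i]
      tauto
    have hcardprop : ∀ g ∈ T, ((g ∩ I0).card : ℝ) = prop g * g.card := by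
      intro g hg
      obtain ⟨j, -, rfl⟩ := Finset.mem_image.mp hg
      have hgpos : (0:ℝ) < (c s j).card := by
        have : j ∈ c s j := hmem s j
        exact_mod_cast Finset.card_pos.mpr ⟨j, this⟩
      rw [hprop]; field_simp
    have hsum := Finset.sum_fiberwise_of_maps_to hmaps (fun i => 1 / w s i)
    rw [← hsum]
    have hinner : ∀ g ∈ T,
        ∑ i ∈ I0.filter (fun i => c s i = g), 1 / w s i
          = ((g.card : ℝ) - (g ∩ I0).card) / (1 - pi0) := by
      intro g hg
      obtain ⟨j, -, hgj⟩ := Finset.mem_image.mp hg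
      have hp := hpropmem s j
      have hgpos : (0:ℝ) < (c s j).card := by
        have : j ∈ c s j := hmem s j
        exact_mod_cast Finset.card_pos.mpr ⟨j, this⟩
      have hconst : ∀ i ∈ I0.filter (fun i => c s i = g),
          1 / w s i = (1 - prop g) / (prop g * (1 - pi0)) := by
        intro i hi
        have hci : c s i = g := (Finset.mem_filter.mp hi).2
        rw [hw, hci, one_div_div]
      rw [Finset.sum_congr rfl hconst, Finset.sum_const, hfiltI0 g hg,
        nsmul_eq_mul, hcardprop g hg]
      have hpg : prop g ≠ 0 := by rw [← hgj]; exact ne_of_gt hp.1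
      have h1 : (1 - pi0) ≠ 0 := ne_of_gt h1pi0pos
      rw [eq_div_iff h1]
      calc prop g * ↑g.card * ((1 - prop g) / (prop g * (1 - pi0))) * (1 - pi0)
          = ↑g.card * (1 - prop g) * ((prop g * (1 - pi0)) / (prop g * (1 - pi0))) := by ring
        _ = ↑g.card - prop g * ↑g.card := by rw [div_self (mul_ne_zero hpg h1)]; ring
    rw [Finset.sum_congr rfl hinner]
    have hcardU : ∑ g ∈ T, ((g.card : ℝ)) = N := by
      have := Finset.card_eq_sum_card_fiberwise hmapsU
      rw [Finset.sum_congr rfl (fun g hg => by rw [hfiltU g hg])] at this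
      simp only [Finset.card_univ, Fintype.card_fin] at this
      exact_mod_cast this.symm
    have hcardI0 : ∑ g ∈ T, (((g ∩ I0).card : ℝ)) = I0.card := by
      have := Finset.card_eq_sum_card_fiberwise hmaps
      rw [Finset.sum_congr rfl (fun g hg => by rw [hfiltI0 g hg])] at this
      exact_mod_cast this.symm
    rw [← Finset.sum_div]
    rw [Finset.sum_sub_distrib, hcardU, hcardI0, h1pi0]
    have hI0lt : (I0.card : ℝ) < N := by
      have := hpi0mem.2; rw [hpi0, div_lt_one hNpos] at this; exact this
    have hne : (N:ℝ) - I0.card ≠ 0 := by linarith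
    field_simp
  have : ∑ i ∈ I0, 1 / W i = (1 / (S:ℝ)) * ∑ s : Fin S, ∑ i ∈ I0, 1 / w s i := by
    rw [Finset.sum_congr rfl (fun i _ => hW i), ← Finset.mul_sum, Finset.sum_comm]
  rw [this, Finset.sum_congr rfl (fun s _ => key s), Finset.sum_const,
    Finset.card_univ, Fintype.card_fin, nsmul_eq_mul]
  have hSpos : (0:ℝ) < S := by positivity
  field_simp
end
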